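/- Let a be an object. Then Hom(−, a) with the weak order, together with the map w ↦ w^⊥ := w w_I, is an ortho-complemented lattice: (O1) w ∧ w^⊥ = id^a; (O2) w ∨ w^⊥ = w_I; (O3) (w^⊥)^⊥ = w; (O4) u ≤_R v implies v^⊥ ≤_R u^⊥. -/
import Mathlib


set_option linter.unusedSectionVars false

/-- A Cartan scheme `C = C(I, A, (ρ_i), (C^a))`. -/
structure CartanScheme (I A : Type) [Fintype I] [DecidableEq I] [Fintype A] [Nonempty A] where
  ρ : I → A → A
  c : A → I → I → ℤ
  ρ_invol : ∀ i a, ρ i (ρ i a) = a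
  c_diag : ∀ a i, c a i i = 2
  c_offdiag_nonpos : ∀ a i j, i ≠ j → c a i j ≤ 0
  c_zero_symm : ∀ a i j, c a i j = 0 → c a j i = 0
  c_rho : ∀ a i j, c (ρ i a) i j = c a i j

namespace CartanScheme

variable {I A : Type} [Fintype I] [DecidableEq I] [Fintype A] [Nonempty A] [DecidableEq A]
variable (C : CartanScheme I A)

/-- The simple reflection `σ_i^a` as a map `ℤ^I → ℤ^I`, `σ_i^a(α_j) = α_j - c^a_{ij} α_i`. -/
def sigma (a : A) (i : I) : (I → ℤ) → (I → ℤ) :=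
  fun v k => v k - (if k = i then ∑ j, C.c a i j * v j else 0)

/-- Target object of the word `[i_1, …, i_k]` read at source object `a`:
`ρ_{i_1} ⋯ ρ_{i_k}(a)`. -/
def wordTarget (a : A) : List I → A
  | [] => a
  | i :: l => C.ρ i (wordTarget a l)

/-- The map `σ_{i_1} ⋯ σ_{i_k}^a : ℤ^I → ℤ^I` determined by a word with source `a`. -/
def wordMap (a : A) : List I → ((I → ℤ) → (I → ℤ))
  | [] => id
  | i :: l => C.sigma (C.wordTarget a l) i ∘ wordMap a l

theorem wordTarget_append (a : A) (l₁ l₂ : List I) :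
    C.wordTarget a (l₁ ++ l₂) = C.wordTarget (C.wordTarget a l₂) l₁ := by
  induction l₁ with
  | nil => rfl
  | cons i l ih => simp [wordTarget, ih]

theorem wordMap_append (a : A) (l₁ l₂ : List I) :
    C.wordMap a (l₁ ++ l₂) = C.wordMap (C.wordTarget a l₂) l₁ ∘ C.wordMap a l₂ := by
  induction l₁ with
  | nil => rfl
  | cons i l ih => simp [wordMap, ih, wordTarget_append, Function.comp_assoc]

/-- A morphism of the Weyl groupoid `W(C)`: a source object, a target object, and a map
`ℤ^I → ℤ^I` which is a composition of simple reflections along some word. -/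
@[ext]
structure Mor where
  src : A
  tgt : A
  toFun : (I → ℤ) → (I → ℤ)
  spec : ∃ l : List I, C.wordTarget src l = tgt ∧ C.wordMap src l = toFun

variable {C}

/-- A word realizes a morphism. -/
def Realizes (w : Mor C) (l : List I) : Prop :=
  C.wordTarget w.src l = w.tgt ∧ C.wordMap w.src l = w.toFun

variable (C)

/-- The identity morphism `id^a`. -/
def idMor (a : A) : Mor C := ⟨a, a, id, ⟨[], rfl, rfl⟩⟩

/-- The generator `σ_i^a ∈ Hom(a, ρ_i(a))`. -/
def genMor (i : I) (a : A) : Mor C :=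
  ⟨a, C.ρ i a, C.sigma a i, ⟨[i], rfl, Function.comp_id _⟩⟩

/-- The simple reflection with target `a`, i.e. `id^a σ_i = σ_i^{ρ_i(a)} ∈ Hom(ρ_i(a), a)`. -/
def sgen (a : A) (i : I) : Mor C :=
  { src := C.ρ i a, tgt := a, toFun := C.sigma (C.ρ i a) i,
    spec := ⟨[i], by simp [wordTarget, C.ρ_invol], Function.comp_id _⟩ }

variable {C}

/-- Composition `u ∘ v` (with `v` applied first); junk value `u` if not composable. -/
def Mor.comp (u v : Mor C) : Mor C :=
  if h : v.tgt = u.src then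
    { src := v.src, tgt := u.tgt, toFun := u.toFun ∘ v.toFun,
      spec := by
        obtain ⟨lu, hu1, hu2⟩ := u.spec
        obtain ⟨lv, hv1, hv2⟩ := v.spec
        refine ⟨lu ++ lv, ?_, ?_⟩
        · rw [C.wordTarget_append, hv1, h, hu1]
        · rw [C.wordMap_append, hv1, h, hu2, hv2] }
  else u

/-- Length of a morphism: minimal length of a realizing word. -/
noncomputable def len (w : Mor C) : ℕ := sInf {k | ∃ l : List I, Realizes w l ∧ l.length = k}

/-- A reduced decomposition. -/
def IsReduced (w : Mor C) (l : List I) : Prop := Realizes w l ∧ l.length = len w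

/-- The (right) weak order: `u ≤_R uv` iff `ℓ(uv) = ℓ(u) + ℓ(v)`. -/
def weakLe (u w : Mor C) : Prop :=
  ∃ v : Mor C, v.tgt = u.src ∧ w = u.comp v ∧ len w = len u + len v

/-- Membership in the parabolic subgroupoid `W_J(C)`. -/
def InParabolic (J : Set I) (w : Mor C) : Prop :=
  ∃ l : List I, (∀ i ∈ l, i ∈ J) ∧ Realizes w l

/-- Length with respect to the generators `σ_j`, `j ∈ J`. -/
noncomputable def lenPar (J : Set I) (w : Mor C) : ℕ :=
  sInf {k | ∃ l : List I, (∀ i ∈ l, i ∈ J) ∧ Realizes w l ∧ l.length = k}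

/-- The set of letters occurring in some reduced decomposition of `w`;
by the theorem on reduced decompositions this is the set `J(w)`. -/
def Jset (w : Mor C) : Set I := {i | ∃ l : List I, IsReduced w l ∧ i ∈ l}

variable (C)

/-- The set of real roots at the object `a`. -/
def roots (a : A) : Set (I → ℤ) :=
  {α | ∃ (b : A) (l : List I) (j : I),
    C.wordTarget b l = a ∧ α = C.wordMap b l (Pi.single j 1)}

/-- The set of positive (real) roots at `a`. -/
def posRoots (a : A) : Set (I → ℤ) := {α ∈ C.roots a | ∀ i, 0 ≤ α i}

/-- `R^re(C)` is a finite root system of type `C`: axioms (R1), (R2), (R4) and finiteness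
((R3) holds automatically for real roots). -/
def IsFRS : Prop :=
  (∀ a : A, (C.roots a).Finite) ∧
  (∀ (a : A) (α : I → ℤ), α ∈ C.roots a → (∀ i, 0 ≤ α i) ∨ (∀ i, α i ≤ 0)) ∧
  (∀ (a : A) (i : I) (α : I → ℤ), α ∈ C.roots a → (∃ z : ℤ, α = z • Pi.single i 1) →
    α = Pi.single i 1 ∨ α = -Pi.single i 1) ∧
  (∀ (a : A) (i j : I), i ≠ j →
    (fun x => C.ρ i (C.ρ j x))^[(C.roots a ∩
      {α | ∃ m n : ℕ, α = (m : ℤ) • Pi.single i 1 + (n : ℤ) • Pi.single j 1}).ncard] a = a)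

variable {C}

/-- `I_L(w)`: the set of simple reflections with target `w.tgt` below `w` in weak order. -/
def IL (w : Mor C) : Set I := {i | weakLe (sgen C w.tgt i) w}

/-- `m` is the longest element of `Hom(-,a) ∩ W_J(C)`, i.e. `w_J` at the object `a`. -/
def IsLongestPar (a : A) (J : Set I) (m : Mor C) : Prop :=
  m.tgt = a ∧ InParabolic J m ∧
    ∀ x : Mor C, x.tgt = a → InParabolic J x → weakLe x m

/-- `m` is the longest element `w_I` of `Hom(-,a)`. -/
def IsLongestAt (a : A) (m : Mor C) : Prop :=
  m.tgt = a ∧ ∀ x : Mor C, x.tgt = a → weakLe x m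

/-- `z` is the meet of `x` and `y` in `(Hom(-,a), ≤_R)`. -/
def IsMeet (a : A) (x y z : Mor C) : Prop :=
  z.tgt = a ∧ weakLe z x ∧ weakLe z y ∧
    ∀ t : Mor C, t.tgt = a → weakLe t x → weakLe t y → weakLe t z

/-- `z` is the join of `x` and `y` in `(Hom(-,a), ≤_R)`. -/
def IsJoin (a : A) (x y z : Mor C) : Prop :=
  z.tgt = a ∧ weakLe x z ∧ weakLe y z ∧
    ∀ t : Mor C, t.tgt = a → weakLe x t → weakLe y t → weakLe z t

/-- The left coset `u W_J(C) ⊆ Hom(-, u.tgt)`. -/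
def leftCoset (u : Mor C) (J : Set I) : Set (Mor C) :=
  {x | ∃ v : Mor C, InParabolic J v ∧ v.tgt = u.src ∧ x = u.comp v}

end CartanScheme

variable {I A : Type} [Fintype I] [DecidableEq I] [Fintype A] [Nonempty A] [DecidableEq A]

open CartanScheme

namespace CartanScheme

variable {I A : Type} [Fintype I] [DecidableEq I] [Fintype A] [Nonempty A] [DecidableEq A]
variable {C : CartanScheme I A}

lemma sigma_rho_fun (a : A) (i : I) : C.sigma (C.ρ i a) i = C.sigma a i := by
  funext v k
  simp [sigma, C.c_rho]

lemma sigma_sigma (a : A) (i : I) (v : I → ℤ) :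
    C.sigma a i (C.sigma a i v) = v := by
  funext k
  simp only [sigma]
  by_cases h : k = i
  · subst h
    have : ∀ j, C.c a k j * (v j - (if j = k then ∑ m, C.c a k m * v m else 0))
        = C.c a k j * v j - (if j = k then C.c a k j * ∑ m, C.c a k m * v m else 0) := by
      intro j; by_cases hj : j = k <;> simp [hj, mul_sub]
    rw [if_pos rfl, if_pos rfl]
    rw [Finset.sum_congr rfl (fun j _ => this j), Finset.sum_sub_distrib]
    rw [Finset.sum_ite_eq' Finset.univ k (fun j => C.c a k j * ∑ m, C.c a k m * v m)]
    simp [C.c_diag]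
    ring
  · simp [h]

end CartanScheme
namespace CartanScheme

variable {I A : Type} [Fintype I] [DecidableEq I] [Fintype A] [Nonempty A] [DecidableEq A]
variable {C : CartanScheme I A}

lemma wordTarget_reverse (b : A) (l : List I) :
    C.wordTarget (C.wordTarget b l) l.reverse = b := by
  induction l generalizing b with
  | nil => rfl
  | cons i l ih =>
    rw [List.reverse_cons, wordTarget_append]
    show C.wordTarget (C.wordTarget (C.ρ i (C.wordTarget b l)) [i]) l.reverse = b
    have : C.wordTarget (C.ρ i (C.wordTarget b l)) [i] = C.wordTarget b l := by
      show C.ρ i (C.ρ i (C.wordTarget b l)) = _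
      rw [C.ρ_invol]
    rw [this, ih]

lemma wordMap_reverse_apply (b : A) (l : List I) (v : I → ℤ) :
    C.wordMap (C.wordTarget b l) l.reverse (C.wordMap b l v) = v := by
  induction l generalizing b v with
  | nil => rfl
  | cons i l ih =>
    rw [List.reverse_cons, wordMap_append]
    show (C.wordMap (C.wordTarget (C.ρ i (C.wordTarget b l)) [i]) l.reverse ∘
      C.wordMap (C.ρ i (C.wordTarget b l)) [i]) (C.wordMap b (i :: l) v) = v
    have h1 : C.wordTarget (C.ρ i (C.wordTarget b l)) [i] = C.wordTarget b l := by
      show C.ρ i (C.ρ i (C.wordTarget b l)) = _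
      rw [C.ρ_invol]
    have h2 : C.wordMap (C.ρ i (C.wordTarget b l)) [i] = C.sigma (C.wordTarget b l) i := by
      show C.sigma (C.ρ i (C.wordTarget b l)) i ∘ id = _
      rw [sigma_rho_fun]; rfl
    rw [h1, h2]
    show C.wordMap (C.wordTarget b l) l.reverse
      (C.sigma (C.wordTarget b l) i (C.sigma (C.wordTarget b l) i (C.wordMap b l v))) = v
    rw [sigma_sigma, ih]

end CartanScheme
namespace CartanScheme

variable {I A : Type} [Fintype I] [DecidableEq I] [Fintype A] [Nonempty A] [DecidableEq A]
variable {C : CartanScheme I A}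

lemma Mor.exists_realizes (w : Mor C) : ∃ l : List I, Realizes w l := w.spec

lemma comp_src {u v : Mor C} (h : v.tgt = u.src) : (u.comp v).src = v.src := by
  rw [Mor.comp, dif_pos h]

lemma comp_tgt {u v : Mor C} (h : v.tgt = u.src) : (u.comp v).tgt = u.tgt := by
  rw [Mor.comp, dif_pos h]

lemma comp_toFun {u v : Mor C} (h : v.tgt = u.src) :
    (u.comp v).toFun = u.toFun ∘ v.toFun := by
  rw [Mor.comp, dif_pos h]

lemma comp_ext {u v z : Mor C} (h : v.tgt = u.src) (hs : z.src = v.src)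
    (ht : z.tgt = u.tgt) (hf : z.toFun = u.toFun ∘ v.toFun) : u.comp v = z := by
  apply Mor.ext
  · rw [comp_src h, hs]
  · rw [comp_tgt h, ht]
  · rw [comp_toFun h, hf]

lemma len_spec (w : Mor C) : ∃ l : List I, Realizes w l ∧ l.length = len w := by
  have hne : {k | ∃ l : List I, Realizes w l ∧ l.length = k}.Nonempty := by
    obtain ⟨l, hl⟩ := w.exists_realizes
    exact ⟨l.length, l, hl, rfl⟩
  exact Nat.sInf_mem hne

lemma len_le {w : Mor C} {l : List I} (h : Realizes w l) : len w ≤ l.length :=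
  Nat.sInf_le ⟨l, h, rfl⟩

lemma realizes_nil_idMor (b : A) : Realizes (idMor C b) ([] : List I) := ⟨rfl, rfl⟩

lemma len_idMor (b : A) : len (idMor C b) = 0 :=
  Nat.le_zero.mp (len_le (realizes_nil_idMor b))

lemma eq_idMor_of_len_zero {x : Mor C} {b : A} (ht : x.tgt = b) (h : len x = 0) :
    x = idMor C b := by
  have h0 : (0 : ℕ) ∈ {k | ∃ l : List I, Realizes x l ∧ l.length = k} := by
    rw [← h]; exact (len_spec x).elim fun l hl => ⟨l, hl.1, hl.2⟩
  obtain ⟨l, hl, hlen⟩ := h0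
  have : l = [] := List.length_eq_zero_iff.mp hlen
  subst this
  obtain ⟨h1, h2⟩ := hl
  apply Mor.ext
  · show x.src = b; rw [← ht]; exact h1
  · exact ht
  · exact h2.symm

lemma comp_idMor (w : Mor C) : w.comp (idMor C w.src) = w :=
  comp_ext rfl rfl rfl rfl

lemma idMor_comp {w : Mor C} {b : A} (h : w.tgt = b) : (idMor C b).comp w = w :=
  comp_ext (by exact h) rfl (by exact h) rfl

lemma weakLe_refl (w : Mor C) : weakLe w w :=
  ⟨idMor C w.src, rfl, (comp_idMor w).symm, by simp [len_idMor]⟩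

lemma comp_assoc {u v t : Mor C} (h1 : v.tgt = u.src) (h2 : t.tgt = v.src) :
    (u.comp v).comp t = u.comp (v.comp t) := by
  have h3 : t.tgt = (u.comp v).src := by rw [comp_src h1, h2]
  have h4 : (v.comp t).tgt = u.src := by rw [comp_tgt h2, h1]
  refine (comp_ext h4 ?_ ?_ ?_).symm
  · rw [comp_src h3, comp_src h2]
  · rw [comp_tgt h3, comp_tgt h1]
  · rw [comp_toFun h3, comp_toFun h1, comp_toFun h2]; rfl

end CartanScheme
namespace CartanScheme

variable {I A : Type} [Fintype I] [DecidableEq I] [Fintype A] [Nonempty A] [DecidableEq A]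
variable {C : CartanScheme I A}

lemma wordTarget_reverse' {b a : A} {l : List I} (h : C.wordTarget b l = a) :
    C.wordTarget a l.reverse = b := by
  subst h; exact wordTarget_reverse b l

lemma wordMap_reverse_apply' {b a : A} {l : List I} (h : C.wordTarget b l = a) (v : I → ℤ) :
    C.wordMap a l.reverse (C.wordMap b l v) = v := by
  subst h; exact wordMap_reverse_apply b l v

/-- The inverse morphism, realized by a reversed word. -/
noncomputable def invMor (w : Mor C) : Mor C :=
  { src := w.tgt, tgt := w.src,
    toFun := C.wordMap w.tgt w.spec.choose.reverse,
    spec := ⟨w.spec.choose.reverse, wordTarget_reverse' w.spec.choose_spec.1, rfl⟩ }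

@[simp] lemma invMor_src (w : Mor C) : (invMor w).src = w.tgt := rfl
@[simp] lemma invMor_tgt (w : Mor C) : (invMor w).tgt = w.src := rfl

lemma invMor_apply_apply (w : Mor C) (x : I → ℤ) :
    (invMor w).toFun (w.toFun x) = x := by
  have h2 := w.spec.choose_spec.2
  show C.wordMap w.tgt w.spec.choose.reverse (w.toFun x) = x
  have h3 := wordMap_reverse_apply' w.spec.choose_spec.1 x
  rw [h2] at h3
  exact h3

lemma apply_invMor_apply (w : Mor C) (x : I → ℤ) :
    w.toFun ((invMor w).toFun x) = x := by
  have h2 := w.spec.choose_spec.2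
  show w.toFun (C.wordMap w.tgt w.spec.choose.reverse x) = x
  have h3 := wordMap_reverse_apply' (l := w.spec.choose.reverse)
    (wordTarget_reverse' w.spec.choose_spec.1) x
  rw [List.reverse_reverse, h2] at h3
  exact h3

lemma toFun_injective (w : Mor C) : Function.Injective w.toFun :=
  Function.LeftInverse.injective (invMor_apply_apply w)

lemma toFun_surjective (w : Mor C) : Function.Surjective w.toFun :=
  Function.RightInverse.surjective (apply_invMor_apply w)

/-- Two-sided inverse uniqueness: a morphism which is a left inverse equals `invMor`. -/
lemma eq_invMor {u q : Mor C} (hs : q.src = u.tgt) (ht : q.tgt = u.src)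
    (hf : ∀ x, q.toFun (u.toFun x) = x) : q = invMor u := by
  apply Mor.ext
  · rw [hs]; rfl
  · rw [ht]; rfl
  · funext x
    obtain ⟨y, rfl⟩ := toFun_surjective u x
    rw [hf y, invMor_apply_apply]

lemma flip_id {u : Mor C} {f : (I → ℤ) → (I → ℤ)} (hfg : ∀ x, f (u.toFun x) = x) :
    ∀ x, u.toFun (f x) = x := by
  intro x
  obtain ⟨y, rfl⟩ := toFun_surjective u x
  rw [hfg y]

lemma realizes_reverse {w : Mor C} {l : List I} (h : Realizes w l) :
    Realizes (invMor w) l.reverse := by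
  obtain ⟨h1, h2⟩ := h
  constructor
  · show C.wordTarget w.tgt l.reverse = w.src
    exact wordTarget_reverse' h1
  · show C.wordMap w.tgt l.reverse = (invMor w).toFun
    funext x
    obtain ⟨y, rfl⟩ := toFun_surjective w x
    rw [invMor_apply_apply]
    conv_lhs => rw [← h2]
    exact wordMap_reverse_apply' h1 y

lemma invMor_invMor (w : Mor C) : invMor (invMor w) = w :=
  (eq_invMor rfl rfl (apply_invMor_apply w)).symm

lemma len_invMor (w : Mor C) : len (invMor w) = len w := by
  have key : ∀ u : Mor C, len (invMor u) ≤ len u := by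
    intro u
    obtain ⟨l, hl, hlen⟩ := len_spec u
    calc len (invMor u) ≤ l.reverse.length := len_le (realizes_reverse hl)
    _ = len u := by rw [List.length_reverse, hlen]
  have h2 := key (invMor w)
  rw [invMor_invMor] at h2
  exact le_antisymm (key w) h2

lemma comp_invMor (w : Mor C) : w.comp (invMor w) = idMor C w.tgt := by
  refine comp_ext (u := w) (v := invMor w) rfl rfl rfl ?_
  funext x; exact (apply_invMor_apply w x).symm

lemma comp_cancel_left {u x y : Mor C} (hx : x.tgt = u.src) (hy : y.tgt = u.src)
    (h : u.comp x = u.comp y) : x = y := by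
  apply Mor.ext
  · have := congrArg Mor.src h
    rwa [comp_src hx, comp_src hy] at this
  · rw [hx, hy]
  · have := congrArg Mor.toFun h
    rw [comp_toFun hx, comp_toFun hy] at this
    funext z
    have := congrFun this z
    exact toFun_injective u this

end CartanScheme
namespace CartanScheme

variable {I A : Type} [Fintype I] [DecidableEq I] [Fintype A] [Nonempty A] [DecidableEq A]
variable {C : CartanScheme I A}

section Longest

variable {wL : A → Mor C} (hwL : ∀ b : A, IsLongestAt b (wL b))
include hwL

/-- **Identity R**: `ℓ(w ∘ w_I^{src w}) + ℓ(w) = ℓ(w_I^{src w})`. -/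
lemma lenR (w : Mor C) :
    len (w.comp (wL w.src)) + len w = len (wL w.src) := by
  obtain ⟨v, hv1, hv2, hv3⟩ := (hwL w.src).2 (invMor w) rfl
  have hmt : (wL w.src).tgt = w.src := (hwL w.src).1
  -- from hv2 : wL w.src = (invMor w).comp v
  have hvt : v.tgt = w.tgt := hv1
  have hsrc : (wL w.src).src = v.src := by
    rw [hv2, comp_src hv1]
  have hfun : (wL w.src).toFun = (invMor w).toFun ∘ v.toFun := by
    rw [hv2, comp_toFun hv1]
  have hcomp : w.comp (wL w.src) = v := by
    apply comp_ext hmt hsrc.symm hvt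
    funext x
    rw [hfun]
    show v.toFun x = w.toFun ((invMor w).toFun (v.toFun x))
    rw [apply_invMor_apply]
  rw [hcomp]
  rw [len_invMor] at hv3
  omega

lemma len_le_lenL (x : Mor C) : len x ≤ len (wL x.tgt) := by
  obtain ⟨v, _, _, h3⟩ := (hwL x.tgt).2 x rfl
  omega

/-- Involution property at objects of the form `(wL b).src`. -/
lemma inv_at_src (b : A) :
    (wL ((wL b).src)).comp (wL ((wL ((wL b).src)).src)) = idMor C ((wL b).src) := by
  set b1 := (wL b).src with hb1
  set b2 := (wL b1).src with hb2
  have hmt : (wL b).tgt = b := (hwL b).1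
  have hmt1 : (wL b1).tgt = b1 := (hwL b1).1
  set t : Mor C := (wL b).comp (wL b1) with ht
  have htsrc : t.src = b2 := by rw [ht, comp_src hmt1]
  have httgt : t.tgt = b := by rw [ht, comp_tgt hmt1, hmt]
  -- lenR at wL b : len t + len (wL b) = len (wL b1)
  have e1 : len t + len (wL b) = len (wL b1) := lenR hwL (wL b)
  -- lenR at wL b1 : len ((wL b1).comp (wL b2)) + len (wL b1) = len (wL b2)
  have e2 : len ((wL b1).comp (wL b2)) + len (wL b1) = len (wL b2) := lenR hwL (wL b1)
  -- lenR at t : len (t.comp (wL t.src)) + len t = len (wL t.src)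
  have e3 : len (t.comp (wL t.src)) + len t = len (wL t.src) := lenR hwL t
  rw [htsrc] at e3
  have e4 : len (t.comp (wL b2)) ≤ len (wL b) := by
    have := len_le_lenL hwL (t.comp (wL b2))
    have htt : (t.comp (wL b2)).tgt = b := by
      rw [comp_tgt]
      · exact httgt
      · rw [(hwL b2).1, htsrc]
    rwa [htt] at this
  have hz : len ((wL b1).comp (wL b2)) = 0 := by omega
  exact eq_idMor_of_len_zero (by rw [comp_tgt (by rw [(hwL b2).1]), hmt1]) hz

/-- From an involution identity at `e`, derive all the consequences. -/
lemma inv_consequences {e : A}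
    (hInv : (wL e).comp (wL ((wL e).src)) = idMor C e) :
    (wL ((wL e).src)).src = e ∧
    (∀ x, (wL e).toFun ((wL ((wL e).src)).toFun x) = x) ∧
    (∀ x, (wL ((wL e).src)).toFun ((wL e).toFun x) = x) ∧
    (wL ((wL e).src)) = invMor (wL e) ∧
    len (wL ((wL e).src)) = len (wL e) := by
  set e1 := (wL e).src with he1
  have hc : (wL e1).tgt = (wL e).src := by rw [(hwL e1).1]
  have hsrc : (wL e1).src = e := by
    have := congrArg Mor.src hInv
    rwa [comp_src hc] at this
  have hfun : ∀ x, (wL e).toFun ((wL e1).toFun x) = x := by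
    intro x
    have := congrArg Mor.toFun hInv
    rw [comp_toFun hc] at this
    exact congrFun this x
  have hflip : ∀ x, (wL e1).toFun ((wL e).toFun x) = x := by
    intro x
    obtain ⟨y, rfl⟩ := toFun_surjective (wL e1) x
    rw [hfun y]
  have heq : wL e1 = invMor (wL e) := by
    refine eq_invMor ?_ ?_ hflip
    · rw [hsrc, (hwL e).1]
    · rw [(hwL e1).1]
  refine ⟨hsrc, hfun, hflip, heq, ?_⟩
  rw [heq, len_invMor]

/-- Constancy of the longest length across a morphism, given the involution at its source. -/
lemma lenf_eq (w : Mor C)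
    (hInv : (wL w.src).comp (wL ((wL w.src).src)) = idMor C w.src) :
    len (wL w.tgt) = len (wL w.src) := by
  obtain ⟨hsrc, hfun, hflip, heq, hlen⟩ := inv_consequences hwL hInv
  set b' := w.src with hb'
  set a' := w.tgt with ha'
  set m' : Mor C := wL b' with hm'
  set e1 := (wL b').src with he1
  set m'' : Mor C := wL e1 with hm''
  set ma : Mor C := wL a' with hma
  have hm't : m'.tgt = b' := (hwL b').1
  have hm''t : m''.tgt = e1 := (hwL e1).1
  set t : Mor C := w.comp m' with htdef
  have httgt : t.tgt = a' := by rw [htdef, comp_tgt hm't]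
  have htsrc : t.src = e1 := by rw [htdef, comp_src hm't]
  have e_t : len t + len w = len m' := lenR hwL w
  obtain ⟨u, hu1, hu2, hu3⟩ := (hwL a').2 t httgt
  set p : Mor C := (invMor w).comp ma with hpdef
  have hmat : ma.tgt = (invMor w).src := by rw [(hwL a').1]; rfl
  have hpsrc : p.src = ma.src := by rw [hpdef, comp_src hmat]
  have hptgt : p.tgt = b' := by rw [hpdef, comp_tgt hmat]; rfl
  have e_p : len p + len w = len ma := by
    have := lenR hwL (invMor w)
    rw [len_invMor] at this
    exact this
  set q : Mor C := (invMor p).comp m' with hqdef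
  have hm'p : m'.tgt = (invMor p).src := by rw [hm't, invMor_src, hptgt]
  have hqsrc : q.src = e1 := by rw [hqdef, comp_src hm'p]
  have hqtgt : q.tgt = p.src := by rw [hqdef, comp_tgt hm'p, invMor_tgt]
  have e_q : len q + len p = len m' := by
    have h5 : (invMor p).src = b' := by rw [invMor_src, hptgt]
    have := lenR hwL (invMor p)
    rw [len_invMor, h5] at this
    exact this
  -- u = m''.comp p
  rw [← hma] at hu2 hu3
  have hcomp1 : p.tgt = m''.src := by rw [hptgt, hsrc]
  have hmp_tgt : (m''.comp p).tgt = e1 := by rw [comp_tgt hcomp1, hm''t]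
  have hmp_src : (m''.comp p).src = p.src := comp_src hcomp1
  have hmp_fun : (m''.comp p).toFun = m''.toFun ∘ p.toFun := comp_toFun hcomp1
  have hu_eq : u = m''.comp p := by
    have hcomp2 : (m''.comp p).tgt = t.src := by rw [hmp_tgt, htsrc]
    have a1 : t.comp (m''.comp p) = (t.comp m'').comp p := by
      refine (comp_assoc ?_ ?_).symm
      · rw [hm''t, htsrc]
      · exact hcomp1
    have a2 : t.comp m'' = w := by
      rw [htdef, comp_assoc hm't (by rw [hm''t] : m''.tgt = m'.src)]
      rw [hInv]
      exact comp_idMor w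
    have a3 : w.comp p = ma := by
      rw [hpdef, ← comp_assoc (v := invMor w) rfl hmat]
      rw [comp_invMor w]
      exact idMor_comp ((hwL a').1)
    have key : t.comp (m''.comp p) = ma := by rw [a1, a2, a3]
    refine comp_cancel_left (u := t) hu1 hcomp2 ?_
    rw [key, ← hu2]
  -- q = invMor u
  have hq_inv : q = invMor u := by
    refine eq_invMor ?_ ?_ ?_
    · rw [hqsrc, hu_eq, hmp_tgt]
    · rw [hqtgt, hu_eq, hmp_src]
    · intro x
      have hqfun : q.toFun = (invMor p).toFun ∘ m'.toFun := by
        rw [hqdef, comp_toFun hm'p]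
      rw [hu_eq, hmp_fun, hqfun]
      show (invMor p).toFun (m'.toFun (m''.toFun (p.toFun x))) = x
      rw [hfun (p.toFun x), invMor_apply_apply]
  have e_u : len u = len q := by rw [hq_inv, len_invMor]
  -- assemble
  omega

/-- The involution identity at every object. -/
lemma inv_all (b : A) :
    (wL b).comp (wL ((wL b).src)) = idMor C b := by
  have hstep2 := inv_at_src hwL b
  have hconst : len (wL (wL b).tgt) = len (wL (wL b).src) := lenf_eq hwL (wL b) hstep2
  rw [(hwL b).1] at hconst
  have e1 : len ((wL b).comp (wL ((wL b).src))) + len (wL b) = len (wL ((wL b).src)) :=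
    lenR hwL (wL b)
  have hz : len ((wL b).comp (wL ((wL b).src))) = 0 := by omega
  refine eq_idMor_of_len_zero ?_ hz
  rw [comp_tgt (by rw [(hwL ((wL b).src)).1]), (hwL b).1]

lemma lenf_all (w : Mor C) : len (wL w.tgt) = len (wL w.src) :=
  lenf_eq hwL w (inv_all hwL w.src)

end Longest

end CartanScheme
namespace CartanScheme

variable {I A : Type} [Fintype I] [DecidableEq I] [Fintype A] [Nonempty A] [DecidableEq A]
variable {C : CartanScheme I A}

lemma weakLe_idMor {x : Mor C} {a : A} (h : x.tgt = a) : weakLe (idMor C a) x :=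
  ⟨x, h, (idMor_comp h).symm, by simp [len_idMor]⟩

section Main

variable {wL : A → Mor C} (hwL : ∀ b : A, IsLongestAt b (wL b))
include hwL

lemma O3lem (w : Mor C) :
    (w.comp (wL w.src)).comp (wL (w.comp (wL w.src)).src) = w := by
  have hmt : (wL w.src).tgt = w.src := (hwL w.src).1
  have hsrc : (w.comp (wL w.src)).src = (wL w.src).src := comp_src hmt
  rw [hsrc, comp_assoc hmt ((hwL ((wL w.src).src)).1), inv_all hwL w.src]
  exact comp_idMor w

lemma O1lem (a : A) (w : Mor C) (hwt : w.tgt = a) :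
    IsMeet a w (w.comp (wL w.src)) (idMor C a) := by
  have hmt : (wL w.src).tgt = w.src := (hwL w.src).1
  have hpt : (w.comp (wL w.src)).tgt = a := by rw [comp_tgt hmt, hwt]
  refine ⟨rfl, weakLe_idMor hwt, weakLe_idMor hpt, ?_⟩
  intro t' ht' h1 h2
  obtain ⟨x, hx1, hx2, hx3⟩ := h1
  obtain ⟨y, hy1, hy2, hy3⟩ := h2
  have hxsrc : w.src = x.src := by
    have := congrArg Mor.src hx2
    rwa [comp_src hx1] at this
  have hmtx : (wL w.src).tgt = x.src := by rw [hmt, hxsrc]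
  have hy_eq : y = x.comp (wL w.src) := by
    have hyt : (x.comp (wL w.src)).tgt = t'.src := by rw [comp_tgt hmtx, hx1]
    refine comp_cancel_left (u := t') hy1 hyt ?_
    rw [← hy2, ← comp_assoc hx1 hmtx]
    conv_rhs => rw [← hx2]
  have e1 : len (w.comp (wL w.src)) + len w = len (wL w.src) := lenR hwL w
  have e2 : len (x.comp (wL x.src)) + len x = len (wL x.src) := lenR hwL x
  rw [← hxsrc] at e2
  have e3 : len y = len (x.comp (wL w.src)) := by rw [hy_eq]
  have hz : len t' = 0 := by omega
  rw [eq_idMor_of_len_zero ht' hz]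
  exact weakLe_refl _

lemma O2lem (a : A) (w : Mor C) (hwt : w.tgt = a) :
    IsJoin a w (w.comp (wL w.src)) (wL a) := by
  have hmt : (wL w.src).tgt = w.src := (hwL w.src).1
  have hpt : (w.comp (wL w.src)).tgt = a := by rw [comp_tgt hmt, hwt]
  refine ⟨(hwL a).1, (hwL a).2 w hwt, (hwL a).2 _ hpt, ?_⟩
  intro t' ht' h1 h2
  obtain ⟨x, hx1, hx2, hx3⟩ := h1
  obtain ⟨y, hy1, hy2, hy3⟩ := h2
  have hy1' : y.tgt = (wL w.src).src := by rw [hy1, comp_src hmt]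
  have hx_eq : x = (wL w.src).comp y := by
    have hyt : ((wL w.src).comp y).tgt = w.src := by rw [comp_tgt hy1', hmt]
    refine comp_cancel_left (u := w) hx1 hyt ?_
    rw [← hx2, hy2, comp_assoc hmt hy1']
  obtain ⟨hsrc_g, hfun_g, hflip_g, heq_g, hlen_g⟩ :=
    inv_consequences hwL (inv_all hwL w.src)
  have hqc : (wL ((wL w.src).src)).tgt = (invMor y).src := by
    rw [(hwL ((wL w.src).src)).1, invMor_src, hy1']
  set q : Mor C := (invMor y).comp (wL ((wL w.src).src)) with hqdef
  have hq_inv : q = invMor x := by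
    refine eq_invMor ?_ ?_ ?_
    · rw [hqdef, comp_src hqc, hsrc_g, hx1]
    · rw [hqdef, comp_tgt hqc, invMor_tgt, hx_eq, comp_src hy1']
    · intro z
      have hxf : x.toFun = (wL w.src).toFun ∘ y.toFun := by
        rw [hx_eq, comp_toFun hy1']
      have hqf : q.toFun = (invMor y).toFun ∘ (wL ((wL w.src).src)).toFun := by
        rw [hqdef, comp_toFun hqc]
      rw [hxf, hqf]
      show (invMor y).toFun ((wL ((wL w.src).src)).toFun ((wL w.src).toFun (y.toFun z))) = z
      rw [hflip_g (y.toFun z), invMor_apply_apply]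
  have e_q : len q + len y = len (wL ((wL w.src).src)) := by
    have := lenR hwL (invMor y)
    rw [len_invMor, invMor_src, hy1'] at this
    exact this
  have e_x : len x = len q := by rw [hq_inv, len_invMor]
  have e1 : len (w.comp (wL w.src)) + len w = len (wL w.src) := lenR hwL w
  have ht_len : len t' = len (wL w.src) := by omega
  obtain ⟨z, hz1, hz2, hz3⟩ := (hwL a).2 t' ht'
  have hfa : len (wL a) = len (wL w.src) := by
    have := lenf_all hwL w
    rwa [hwt] at this
  have hz0 : len z = 0 := by omega
  have hzid : z = idMor C t'.src := eq_idMor_of_len_zero hz1 hz0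
  have : wL a = t' := by rw [hz2, hzid, comp_idMor]
  rw [this]
  exact weakLe_refl _

lemma O4lem (a : A) (u v : Mor C) (hu : u.tgt = a) (hv : v.tgt = a)
    (huv : weakLe u v) :
    weakLe (v.comp (wL v.src)) (u.comp (wL u.src)) := by
  obtain ⟨s, hs1, hs2, hs3⟩ := huv
  have hvsrc : v.src = s.src := by rw [hs2, comp_src hs1]
  have hsst : (wL s.src).tgt = s.src := (hwL s.src).1
  have hsbt : (s.comp (wL s.src)).tgt = u.src := by rw [comp_tgt hsst, hs1]
  obtain ⟨y, hy1, hy2, hy3⟩ := (hwL u.src).2 (s.comp (wL s.src)) hsbt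
  have hvperp : v.comp (wL v.src) = u.comp (s.comp (wL s.src)) := by
    rw [hvsrc, hs2, comp_assoc hs1 hsst]
  have huperp : u.comp (wL u.src) = (v.comp (wL v.src)).comp y := by
    rw [hy2, hvperp, comp_assoc hsbt hy1]
  refine ⟨y, ?_, huperp, ?_⟩
  · rw [hy1, hvperp, comp_src hsbt, comp_src hsst]
  · have e1 : len (u.comp (wL u.src)) + len u = len (wL u.src) := lenR hwL u
    have e2 : len (v.comp (wL v.src)) + len v = len (wL v.src) := lenR hwL v
    have e3 : len (s.comp (wL s.src)) + len s = len (wL s.src) := lenR hwL s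
    have e4 : len (wL v.src) = len (wL s.src) := by rw [hvsrc]
    omega

end Main

end CartanScheme

/-- `(Hom(-,a), ≤_R)` with `w^⊥ := w w_I` is ortho-complemented:
(O1) `w ∧ w^⊥ = id^a`; (O2) `w ∨ w^⊥ = w_I`; (O3) `(w^⊥)^⊥ = w`;
(O4) `u ≤_R v` implies `v^⊥ ≤_R u^⊥`. -/
theorem ortho_complemented (C : CartanScheme I A) (hC : C.IsFRS)
    (wL : A → Mor C) (hwL : ∀ b : A, IsLongestAt b (wL b)) (a : A) :
    (∀ w : Mor C, w.tgt = a → IsMeet a w (w.comp (wL w.src)) (idMor C a)) ∧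
    (∀ w : Mor C, w.tgt = a → IsJoin a w (w.comp (wL w.src)) (wL a)) ∧
    (∀ w : Mor C, w.tgt = a →
      (w.comp (wL w.src)).comp (wL (w.comp (wL w.src)).src) = w) ∧
    (∀ u v : Mor C, u.tgt = a → v.tgt = a → weakLe u v →
      weakLe (v.comp (wL v.src)) (u.comp (wL u.src))) := by
  exact ⟨fun w hw => O1lem hwL a w hw, fun w hw => O2lem hwL a w hw,
    fun w _ => O3lem hwL w, fun u v hu hv huv => O4lem hwL a u v hu hv huv⟩
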